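/- In U_q(sl3), E_2 \hat{F}_3[a] = \hat{F}_3[a-2] E_2 - ((q^a - q^{-a})/(q - q^{-1})) F_1. -/
import Mathlib


noncomputable section

/-- The defining relations of `U_q(sl3)` inside an `ℝ`-algebra `R`:
generators `E₁ E₂ F₁ F₂` and `K₁ K₂` with inverses `K₁' K₂'`. -/
structure UqSL3 (R : Type*) [Ring R] [Algebra ℝ R] (q : ℝ)
    (E₁ E₂ F₁ F₂ K₁ K₁' K₂ K₂' : R) : Prop where
  K₁mul : K₁ * K₁' = 1
  K₁mul' : K₁' * K₁ = 1
  K₂mul : K₂ * K₂' = 1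
  K₂mul' : K₂' * K₂ = 1
  Kcomm : K₁ * K₂ = K₂ * K₁
  Kcomm' : K₁ * K₂' = K₂' * K₁
  Kcomm'' : K₁' * K₂ = K₂ * K₁'
  KE11 : K₁ * E₁ = (q ^ (2:ℤ)) • (E₁ * K₁)
  KE12 : K₁ * E₂ = (q ^ (-1:ℤ)) • (E₂ * K₁)
  KE21 : K₂ * E₁ = (q ^ (-1:ℤ)) • (E₁ * K₂)
  KE22 : K₂ * E₂ = (q ^ (2:ℤ)) • (E₂ * K₂)
  KF11 : K₁ * F₁ = (q ^ (-2:ℤ)) • (F₁ * K₁)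
  KF12 : K₁ * F₂ = (q ^ (1:ℤ)) • (F₂ * K₁)
  KF21 : K₂ * F₁ = (q ^ (1:ℤ)) • (F₁ * K₂)
  KF22 : K₂ * F₂ = (q ^ (-2:ℤ)) • (F₂ * K₂)
  EF11 : E₁ * F₁ - F₁ * E₁ = (q - q⁻¹)⁻¹ • (K₁ - K₁')
  EF22 : E₂ * F₂ - F₂ * E₂ = (q - q⁻¹)⁻¹ • (K₂ - K₂')
  EF12 : E₁ * F₂ = F₂ * E₁
  EF21 : E₂ * F₁ = F₁ * E₂
  serreE₁ : E₁ ^ 2 * E₂ - (q + q⁻¹) • (E₁ * E₂ * E₁) + E₂ * E₁ ^ 2 = 0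
  serreE₂ : E₂ ^ 2 * E₁ - (q + q⁻¹) • (E₂ * E₁ * E₂) + E₁ * E₂ ^ 2 = 0
  serreF₁ : F₁ ^ 2 * F₂ - (q + q⁻¹) • (F₁ * F₂ * F₁) + F₂ * F₁ ^ 2 = 0
  serreF₂ : F₂ ^ 2 * F₁ - (q + q⁻¹) • (F₂ * F₁ * F₂) + F₁ * F₂ ^ 2 = 0

/-- `F̂₃[a] = F₁F₂ (q^{a+1}K₂ - q^{-a-1}K₂⁻¹)/(q-q⁻¹) - F₂F₁ (q^a K₂ - q^{-a}K₂⁻¹)/(q-q⁻¹)`. -/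
def hatF₃ {R : Type*} [Ring R] [Algebra ℝ R] (q a : ℝ) (F₁ F₂ K₂ K₂' : R) : R :=
  (q - q⁻¹)⁻¹ • (F₁ * F₂ * (q ^ (a + 1) • K₂ - q ^ (-(a + 1)) • K₂')
    - F₂ * F₁ * (q ^ a • K₂ - q ^ (-a) • K₂'))
set_option maxHeartbeats 1000000 in
theorem stmt {R : Type*} [Ring R] [Algebra ℝ R] (q : ℝ) (hq0 : 0 < q) (hq1 : q < 1)
    (E₁ E₂ F₁ F₂ K₁ K₁' K₂ K₂' : R)
    (h : UqSL3 R q E₁ E₂ F₁ F₂ K₁ K₁' K₂ K₂') (a : ℝ) :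
    E₂ * hatF₃ q a F₁ F₂ K₂ K₂'
      = hatF₃ q (a - 2) F₁ F₂ K₂ K₂' * E₂
        - ((q ^ a - q ^ (-a)) / (q - q⁻¹)) • F₁ := by

  have hq : q ≠ 0 := hq0.ne'
  have hq2 : (q:ℝ)^2 ≠ 0 := pow_ne_zero 2 hq
  have hqq : q - q⁻¹ ≠ 0 := by
    have h1 : (1:ℝ) < q⁻¹ := (one_lt_inv₀ hq0).mpr hq1
    have : q < q⁻¹ := lt_trans hq1 h1
    exact sub_ne_zero.mpr (ne_of_lt this)
  obtain ⟨k2, k2'⟩ : K₂ * K₂' = 1 ∧ K₂' * K₂ = 1 := ⟨h.K₂mul, h.K₂mul'⟩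
  -- commutation rules, generalized forms
  have rEF1 : ∀ x : R, E₂ * (F₁ * x) = F₁ * (E₂ * x) := fun x => by
    rw [← mul_assoc, h.EF21, mul_assoc]
  have hEF2 : E₂ * F₂ = F₂ * E₂ + (q - q⁻¹)⁻¹ • (K₂ - K₂') := by
    have := h.EF22
    rw [sub_eq_iff_eq_add] at this
    rw [this, add_comm]
  have rEF2 : ∀ x : R, E₂ * (F₂ * x)
      = F₂ * (E₂ * x) + (q - q⁻¹)⁻¹ • (K₂ * x) - (q - q⁻¹)⁻¹ • (K₂' * x) := fun x => by
    rw [← mul_assoc, hEF2, add_mul, smul_mul_assoc, sub_mul, mul_assoc, smul_sub]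
    abel
  have hz : (q:ℝ)^(2:ℤ) = q^2 := by rw [zpow_two, sq]
  have hEK2 : E₂ * K₂ = (q^2)⁻¹ • (K₂ * E₂) := by
    rw [h.KE22, hz, smul_smul, inv_mul_cancel₀ hq2, one_smul]
  have rEK2 : ∀ x : R, E₂ * (K₂ * x) = (q^2)⁻¹ • (K₂ * (E₂ * x)) := fun x => by
    rw [← mul_assoc, hEK2, smul_mul_assoc, mul_assoc]
  have hEK2' : E₂ * K₂' = (q^2) • (K₂' * E₂) := by
    have h1 : E₂ * K₂' = K₂' * (K₂ * E₂) * K₂' := by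
      rw [← mul_assoc, k2', one_mul]
    rw [h1, h.KE22, hz, mul_smul_comm, smul_mul_assoc, mul_assoc, mul_assoc, k2, mul_one]
  have rEK2' : ∀ x : R, E₂ * (K₂' * x) = (q^2) • (K₂' * (E₂ * x)) := fun x => by
    rw [← mul_assoc, hEK2', smul_mul_assoc, mul_assoc]
  have hK2F1 : K₂ * F₁ = q • (F₁ * K₂) := by
    have := h.KF21; rwa [zpow_one] at this
  have rK2F1 : ∀ x : R, K₂ * (F₁ * x) = q • (F₁ * (K₂ * x)) := fun x => by
    rw [← mul_assoc, hK2F1, smul_mul_assoc, mul_assoc]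
  have hK2'F1 : K₂' * F₁ = q⁻¹ • (F₁ * K₂') := by
    have h1 : K₂' * F₁ = K₂' * (F₁ * K₂) * K₂' := by
      rw [mul_assoc, mul_assoc, k2, mul_one]
    have h2 : F₁ * K₂ = q⁻¹ • (K₂ * F₁) := by
      rw [hK2F1, smul_smul, inv_mul_cancel₀ hq, one_smul]
    rw [h1, h2, mul_smul_comm, smul_mul_assoc]
    congr 1
    rw [← mul_assoc, k2', one_mul]
  have rK2'F1 : ∀ x : R, K₂' * (F₁ * x) = q⁻¹ • (F₁ * (K₂' * x)) := fun x => by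
    rw [← mul_assoc, hK2'F1, smul_mul_assoc, mul_assoc]
  have rK2K2' : ∀ x : R, K₂ * (K₂' * x) = x := fun x => by
    rw [← mul_assoc, k2, one_mul]
  have rK2'K2 : ∀ x : R, K₂' * (K₂ * x) = x := fun x => by
    rw [← mul_assoc, k2', one_mul]
  unfold hatF₃
  simp only [mul_sub, sub_mul, mul_add, add_mul, smul_sub, smul_add, mul_smul_comm,
    smul_mul_assoc, smul_smul, mul_assoc, rEF1, rEF2, rEK2, rEK2', rK2F1, rK2'F1,
    rK2K2', rK2'K2, k2, k2', mul_one, hEK2, hEK2', hK2F1, hK2'F1, hEF2]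
  rw [div_eq_mul_inv]
  have ha : (q:ℝ)^a ≠ 0 := (Real.rpow_pos_of_pos hq0 a).ne'
  have hq21 : q^2 - 1 ≠ 0 := by nlinarith
  have hq21' : q*q - 1 ≠ 0 := by nlinarith
  have hrw : (q - q⁻¹)⁻¹ = q / (q^2 - 1) := by
    have h1 : q - q⁻¹ = (q^2 - 1)/q := by
      rw [eq_div_iff hq, sub_mul, inv_mul_cancel₀ hq]
      ring
    rw [h1, inv_div]
  match_scalars <;>
  · simp only [Real.rpow_add hq0, Real.rpow_sub hq0, Real.rpow_neg hq0.le,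
      Real.rpow_one, Real.rpow_two, hrw]
    field_simp [hq, ha, hq21, hq21']
    try ring
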